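/- arXiv:0904.4819 — 7 statements merged into one kernel-verified Lean document; each statement's English description precedes it below -/
import Mathlib

section
/- If u is a pendant vertex of a graph G (a vertex of degree exactly 1) and v is its unique neighbor, then I(G; −1) = − I(G − N[v]; −1). -/
open Polynomial

open Classical in
/-- The independence polynomial of a graph: `∑ₖ sₖ xᵏ` where `sₖ` is the number of
independent (stable) sets of cardinality `k`. -/
noncomputable def indPoly {V : Type*} [Fintype V] (G : SimpleGraph V) : Polynomial ℤ :=
  ∑ s : Finset V, if ∀ u ∈ s, ∀ v ∈ s, ¬ G.Adj u v then Polynomial.X ^ s.card else 0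
open Classical in
theorem indPoly_pendant {V : Type*} [Fintype V] (G : SimpleGraph V) [DecidableRel G.Adj]
    (u v : V) (hu : G.degree u = 1) (hv : G.Adj u v) :
    (indPoly G).eval (-1) =
      -(indPoly (G.induce ({v} ∪ G.neighborSet v)ᶜ)).eval (-1) := by
  classical
  have huv : u ≠ v := hv.ne
  have hunique : ∀ w, G.Adj u w → w = v := by
    intro w hw
    obtain ⟨a, ha⟩ := Finset.card_eq_one.mp hu
    have h1 : w ∈ G.neighborFinset u := by simpa using hw
    have h2 : v ∈ G.neighborFinset u := by simpa using hv
    rw [ha, Finset.mem_singleton] at h1 h2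
    rw [h1, ← h2]
  set S : Set V := ({v} ∪ G.neighborSet v)ᶜ with hS
  have hvS : v ∉ S := by simp [hS]
  have hSmem : ∀ x : V, x ∈ S ↔ x ≠ v ∧ ¬ G.Adj v x := by
    intro x
    simp only [hS, Set.mem_compl_iff, Set.mem_union, Set.mem_singleton_iff,
      SimpleGraph.mem_neighborSet, not_or]
  -- expand evaluations
  have e1 : (indPoly G).eval (-1)
      = ∑ s : Finset V, if (∀ a ∈ s, ∀ b ∈ s, ¬ G.Adj a b) then (-1 : ℤ)^s.card else 0 := by
    simp [indPoly, Polynomial.eval_finset_sum, apply_ite (Polynomial.eval (-1 : ℤ))]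
  have e2 : (indPoly (G.induce S)).eval (-1)
      = ∑ t : Finset S, if (∀ a ∈ t, ∀ b ∈ t, ¬ (G.induce S).Adj a b) then (-1 : ℤ)^t.card else 0 := by
    simp [indPoly, Polynomial.eval_finset_sum, apply_ite (Polynomial.eval (-1 : ℤ))]
  rw [e1, e2]
  rw [← Finset.sum_filter (fun s : Finset V => ∀ a ∈ s, ∀ b ∈ s, ¬ G.Adj a b)
        (fun s => (-1 : ℤ)^s.card),
      ← Finset.sum_filter (fun t : Finset S => ∀ a ∈ t, ∀ b ∈ t, ¬ (G.induce S).Adj a b)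
        (fun t => (-1 : ℤ)^t.card)]
  set A : Finset (Finset V) :=
    Finset.univ.filter (fun s : Finset V => ∀ a ∈ s, ∀ b ∈ s, ¬ G.Adj a b) with hA
  set B : Finset (Finset S) :=
    Finset.univ.filter (fun t : Finset S => ∀ a ∈ t, ∀ b ∈ t, ¬ (G.induce S).Adj a b) with hB
  rw [← Finset.sum_filter_add_sum_filter_not A (fun s => v ∈ s) (fun s => (-1 : ℤ)^s.card)]
  have hmemA : ∀ s ∈ A, ∀ a ∈ s, ∀ b ∈ s, ¬ G.Adj a b := by
    intro s hs; simpa [hA] using hs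
  -- the part with v ∉ s cancels out via the involution s ↦ s Δ {u}
  have hzero : ∑ s ∈ A.filter (fun s => v ∉ s), (-1 : ℤ)^s.card = 0 := by
    apply Finset.sum_involution (fun s _ => if u ∈ s then s.erase u else insert u s)
    · intro s hs
      by_cases h : u ∈ s
      · have hc : s.card = (s.erase u).card + 1 := (Finset.card_erase_add_one h).symm
        simp only [h, if_true, hc, pow_succ]
        ring
      · simp only [h, if_false, Finset.card_insert_of_notMem h, pow_succ]
        ring
    · intro s hs hf
      by_cases h : u ∈ s
      · simp only [h, if_true]
        intro heq
        exact Finset.notMem_erase u s (heq.symm ▸ h)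
      · simp only [h, if_false]
        intro heq
        exact h (heq ▸ Finset.mem_insert_self u s)
    · intro s hs
      by_cases h : u ∈ s
      · simp only [h, if_true, Finset.notMem_erase, if_false, Finset.insert_erase h]
      · simp only [h, if_false, Finset.mem_insert_self, if_true, Finset.erase_insert h]
    · intro s hs
      simp only [Finset.mem_filter, hA, Finset.mem_univ, true_and] at hs ⊢
      obtain ⟨hind, hvs⟩ := hs
      by_cases h : u ∈ s
      · simp only [h, if_true]
        refine ⟨fun a ha b hb => hind a (Finset.mem_of_mem_erase ha) b (Finset.mem_of_mem_erase hb),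
          fun hc => hvs (Finset.mem_of_mem_erase hc)⟩
      · simp only [h, if_false]
        refine ⟨?_, ?_⟩
        · intro a ha b hb hab
          rcases Finset.mem_insert.mp ha with rfl | ha'
          · rcases Finset.mem_insert.mp hb with rfl | hb'
            · exact G.irrefl hab
            · exact hvs ((hunique b hab) ▸ hb')
          · rcases Finset.mem_insert.mp hb with rfl | hb'
            · exact hvs ((hunique a hab.symm) ▸ ha')
            · exact hind a ha' b hb' hab
        · intro hc
          rcases Finset.mem_insert.mp hc with rfl | hc'
          · exact huv rfl
          · exact hvs hc'
  rw [hzero, add_zero]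
  -- the part with v ∈ s is in bijection with B
  have hmain : ∑ s ∈ A.filter (fun s => v ∈ s), (-1 : ℤ)^s.card
      = ∑ t ∈ B, -(-1 : ℤ)^t.card := by
    refine Finset.sum_bij' (fun s _ => s.subtype (· ∈ S))
      (fun t _ => insert v (t.map (Function.Embedding.subtype (· ∈ S)))) ?_ ?_ ?_ ?_ ?_
    · intro s hs
      simp only [Finset.mem_filter, hA, hB, Finset.mem_univ, true_and] at hs ⊢
      intro a ha b hb hab
      rw [SimpleGraph.comap_adj] at hab
      exact hs.1 a (by simpa using ha) b (by simpa using hb) hab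
    · intro t ht
      simp only [Finset.mem_filter, hA, hB, Finset.mem_univ, true_and] at ht ⊢
      constructor
      · intro a ha b hb hab
        rcases Finset.mem_insert.mp ha with rfl | ha'
        · rcases Finset.mem_insert.mp hb with rfl | hb'
          · exact G.irrefl hab
          · obtain ⟨x, hx, rfl⟩ := Finset.mem_map.mp hb'
            exact ((hSmem _).mp x.2).2 hab
        · obtain ⟨x, hx, rfl⟩ := Finset.mem_map.mp ha'
          rcases Finset.mem_insert.mp hb with rfl | hb'
          · exact ((hSmem _).mp x.2).2 hab.symm
          · obtain ⟨y, hy, rfl⟩ := Finset.mem_map.mp hb'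
            exact ht x hx y hy (by simpa using hab)
      · exact Finset.mem_insert_self v _
    · intro s hs
      simp only [Finset.mem_filter, hA, Finset.mem_univ, true_and] at hs
      obtain ⟨hind, hvs⟩ := hs
      ext w
      simp only [Finset.mem_insert, Finset.mem_map, Finset.mem_subtype,
        Function.Embedding.coe_subtype]
      constructor
      · rintro (rfl | ⟨x, hx, rfl⟩)
        · exact hvs
        · exact hx
      · intro hw
        by_cases hwv : w = v
        · exact Or.inl hwv
        · refine Or.inr ⟨⟨w, ?_⟩, hw, rfl⟩
          exact (hSmem w).mpr ⟨hwv, hind v hvs w hw⟩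
    · intro t ht
      ext a
      simp only [Finset.mem_subtype, Finset.mem_insert, Finset.mem_map,
        Function.Embedding.coe_subtype]
      constructor
      · rintro (ha | ⟨x, hx, hxa⟩)
        · exact absurd (ha ▸ a.2) hvS
        · rwa [← Subtype.ext hxa.symm] at hx
      · intro ha; exact Or.inr ⟨a, ha, rfl⟩
    · intro s hs
      simp only [Finset.mem_filter, hA, Finset.mem_univ, true_and] at hs
      obtain ⟨hind, hvs⟩ := hs
      have hcard : s.card = (s.subtype (· ∈ S)).card + 1 := by
        have h1 : (s.subtype (· ∈ S)).card = (s.filter (· ∈ S)).card := by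
          rw [← Finset.subtype_map (· ∈ S), Finset.card_map]
        have h2 : s.filter (· ∈ S) = s.erase v := by
          ext w
          simp only [Finset.mem_filter, Finset.mem_erase]
          constructor
          · intro ⟨hw, hwS⟩
            exact ⟨((hSmem w).mp hwS).1, hw⟩
          · intro ⟨hwv, hw⟩
            refine ⟨hw, ?_⟩
            exact (hSmem w).mpr ⟨hwv, hind v hvs w hw⟩
        rw [h1, h2]
        exact (Finset.card_erase_add_one hvs).symm
      rw [hcard, pow_succ]
      ring
  rw [hmain, ← Finset.sum_neg_distrib]
end

section
/- If a graph G has two pendant vertices a and b at distance exactly 3 from each other, then I(G; −1) = 0; equivalently, the number of independent sets of even size in G equals the number of independent sets of odd size. -/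
open Polynomial

private def tog {V : Type*} [DecidableEq V] (v : V) (s : Finset V) : Finset V :=
  if v ∈ s then s.erase v else insert v s

private lemma tog_tog {V : Type*} [DecidableEq V] (v : V) (s : Finset V) :
    tog v (tog v s) = s := by
  unfold tog
  by_cases h : v ∈ s <;>
    simp [h, Finset.insert_erase, Finset.erase_insert]

private lemma tog_ne {V : Type*} [DecidableEq V] (v : V) (s : Finset V) :
    tog v s ≠ s := by
  unfold tog
  by_cases h : v ∈ s <;>
    simp [h, Finset.erase_ne_self, Finset.insert_ne_self]

private lemma tog_pow {V : Type*} [DecidableEq V] (v : V) (s : Finset V) :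
    ((-1 : ℤ)) ^ (tog v s).card = -(-1 : ℤ) ^ s.card := by
  unfold tog
  by_cases h : v ∈ s
  · simp only [h, if_true]
    rw [← Finset.card_erase_add_one h, pow_succ]
    ring
  · simp [h, Finset.card_insert_of_notMem h, pow_succ]

private lemma mem_tog {V : Type*} [DecidableEq V] {v w : V} (hvw : w ≠ v) (s : Finset V) :
    w ∈ tog v s ↔ w ∈ s := by
  unfold tog
  by_cases h : v ∈ s <;> simp [h, hvw]

private lemma mem_tog_sub {V : Type*} [DecidableEq V] {v w : V} (s : Finset V)
    (hw : w ∈ tog v s) : w = v ∨ w ∈ s := by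
  unfold tog at hw
  by_cases h : v ∈ s <;> simp [h] at hw
  · exact Or.inr hw.2
  · exact hw.imp id id

private lemma tog_indep {V : Type*} [DecidableEq V] (G : SimpleGraph V) {v : V} {s : Finset V}
    (hs : ∀ u ∈ s, ∀ w ∈ s, ¬ G.Adj u w) (hv : ∀ x ∈ s, ¬ G.Adj v x) :
    ∀ u ∈ tog v s, ∀ w ∈ tog v s, ¬ G.Adj u w := by
  intro u hu w hw
  rcases mem_tog_sub s hu with rfl | hu'
  · rcases mem_tog_sub s hw with rfl | hw'
    · exact G.irrefl
    · exact hv w hw'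
  · rcases mem_tog_sub s hw with rfl | hw'
    · intro h; exact hv u hu' h.symm
    · exact hs u hu' w hw'

private def pend {V : Type*} [DecidableEq V] (G : SimpleGraph V) [DecidableRel G.Adj]
    (a b a' : V) (s : Finset V) : Finset V :=
  if ∀ u ∈ s, ∀ v ∈ s, ¬ G.Adj u v then (if a' ∈ s then tog b s else tog a s) else s

theorem indPoly_two_pendants_dist_three {V : Type*} [Fintype V] (G : SimpleGraph V)
    [DecidableRel G.Adj] (a b : V) (ha : G.degree a = 1) (hb : G.degree b = 1)
    (hdist : G.dist a b = 3) :
    (indPoly G).eval (-1) = 0 := by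
  classical
  -- unique neighbors
  obtain ⟨a', ha'⟩ := Finset.card_eq_one.mp ha
  obtain ⟨b', hb'⟩ := Finset.card_eq_one.mp hb
  have hNa : ∀ x, G.Adj a x → x = a' := by
    intro x hx
    have : x ∈ G.neighborFinset a := (G.mem_neighborFinset a x).mpr hx
    rw [ha'] at this; simpa using this
  have hNb : ∀ x, G.Adj b x → x = b' := by
    intro x hx
    have : x ∈ G.neighborFinset b := (G.mem_neighborFinset b x).mpr hx
    rw [hb'] at this; simpa using this
  have haa' : G.Adj a a' := by
    have : a' ∈ G.neighborFinset a := by rw [ha']; simp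
    exact (G.mem_neighborFinset a a').mp this
  have hbb' : G.Adj b b' := by
    have : b' ∈ G.neighborFinset b := by rw [hb']; simp
    exact (G.mem_neighborFinset b b').mp this
  -- reachability and the length-3 path
  have hreach : G.Reachable a b := by
    by_contra h
    rw [SimpleGraph.dist_eq_zero_iff_eq_or_not_reachable.mpr (Or.inr h)] at hdist
    exact absurd hdist (by norm_num)
  obtain ⟨p, hp⟩ := hreach.exists_walk_length_eq_dist
  rw [hdist] at hp
  have hab' : G.Adj a' b' := by
    cases p with
    | nil => simp at hp
    | cons h1 q =>
      cases q with
      | nil => simp at hp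
      | cons h2 r =>
        cases r with
        | nil => simp at hp
        | cons h3 r' =>
          cases r' with
          | nil =>
            rw [hNa _ h1, hNb _ h3.symm] at h2
            exact h2
          | cons h4 r'' => simp at hp
  have ha'b' : a' ≠ b' := by
    intro h
    have := SimpleGraph.dist_le (SimpleGraph.Walk.cons haa'
      (SimpleGraph.Walk.cons (h ▸ hbb'.symm) SimpleGraph.Walk.nil))
    simp [hdist] at this
  have hba' : b ≠ a' := by
    intro h
    have := SimpleGraph.dist_le (SimpleGraph.Walk.cons (h ▸ haa') SimpleGraph.Walk.nil)
    simp [hdist] at this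
  have haa'ne : a ≠ a' := G.ne_of_adj haa'
  -- the sum
  have heval : (indPoly G).eval (-1)
      = ∑ s : Finset V, (if ∀ u ∈ s, ∀ v ∈ s, ¬ G.Adj u v then (-1 : ℤ) ^ s.card else 0) := by
    unfold indPoly
    rw [Polynomial.eval_finset_sum]
    refine Finset.sum_congr rfl fun s _ => ?_
    by_cases h : ∀ u ∈ s, ∀ v ∈ s, ¬ G.Adj u v
    · rw [if_pos h, if_pos h]; simp
    · rw [if_neg h, if_neg h]; simp
  rw [heval]
  -- helper unfoldings for pend
  have hout1 : ∀ t : Finset V, (∀ u ∈ t, ∀ v ∈ t, ¬ G.Adj u v) → a' ∈ t →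
      pend G a b a' t = tog b t := by
    intro t ht h; unfold pend; rw [if_pos ht, if_pos h]
  have hout2 : ∀ t : Finset V, (∀ u ∈ t, ∀ v ∈ t, ¬ G.Adj u v) → a' ∉ t →
      pend G a b a' t = tog a t := by
    intro t ht h; unfold pend; rw [if_pos ht, if_neg h]
  have hout3 : ∀ t : Finset V, ¬ (∀ u ∈ t, ∀ v ∈ t, ¬ G.Adj u v) →
      pend G a b a' t = t := by
    intro t ht; unfold pend; rw [if_neg ht]
  have hPg : ∀ s : Finset V, (∀ u ∈ s, ∀ v ∈ s, ¬ G.Adj u v) →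
      ∀ u ∈ pend G a b a' s, ∀ v ∈ pend G a b a' s, ¬ G.Adj u v := by
    intro s hs
    by_cases h : a' ∈ s
    · rw [hout1 s hs h]
      refine tog_indep G hs fun x hx hbx => ?_
      exact hs a' h b' ((hNb x hbx) ▸ hx) hab'
    · rw [hout2 s hs h]
      exact tog_indep G hs fun x hx hax => (h ((hNa x hax) ▸ hx)).elim
  refine Finset.sum_ninvolution (pend G a b a') ?_ ?_ (fun s => Finset.mem_univ _) ?_
  · intro s
    by_cases hs : ∀ u ∈ s, ∀ v ∈ s, ¬ G.Adj u v
    · rw [if_pos hs, if_pos (hPg s hs)]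
      by_cases h : a' ∈ s
      · rw [hout1 s hs h, tog_pow]; ring
      · rw [hout2 s hs h, tog_pow]; ring
    · have hgs := hout3 s hs
      rw [if_neg hs, hgs, if_neg hs]; ring
  · intro s hfs
    have hs : ∀ u ∈ s, ∀ v ∈ s, ¬ G.Adj u v := by
      by_contra h; rw [if_neg h] at hfs; exact hfs rfl
    by_cases h : a' ∈ s
    · rw [hout1 s hs h]; exact tog_ne _ _
    · rw [hout2 s hs h]; exact tog_ne _ _
  · intro s
    by_cases hs : ∀ u ∈ s, ∀ v ∈ s, ¬ G.Adj u v
    · have hgind := hPg s hs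
      by_cases h : a' ∈ s
      · rw [hout1 s hs h]
        have hgind' : ∀ u ∈ tog b s, ∀ v ∈ tog b s, ¬ G.Adj u v := by
          rw [← hout1 s hs h]; exact hgind
        have h2 : a' ∈ tog b s := (mem_tog hba'.symm s).mpr h
        rw [hout1 _ hgind' h2, tog_tog]
      · rw [hout2 s hs h]
        have hgind' : ∀ u ∈ tog a s, ∀ v ∈ tog a s, ¬ G.Adj u v := by
          rw [← hout2 s hs h]; exact hgind
        have h2 : a' ∉ tog a s := fun hc => h ((mem_tog haa'ne.symm s).mp hc)
        rw [hout2 _ hgind' h2, tog_tog]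
    · rw [hout3 s hs, hout3 s hs]
end

section
/- For every n ≥ 1: I(P_{3n−2}; −1) = 0 and I(P_{3n−1}; −1) = I(P_{3n}; −1) = (−1)^n. -/
open Polynomial

open Finset
def myP {k : ℕ} (s : Finset (Fin k)) : Prop := ∀ u ∈ s, ∀ v ∈ s, (u : ℕ) + 1 ≠ (v : ℕ)

open Classical in
noncomputable def myg (m : ℕ) : ℤ := ∑ s : Finset (Fin m), if myP s then (-1 : ℤ) ^ s.card else 0

lemma my_powerset_map {α β : Type*} (f : α ↪ β) (s : Finset α) :
    (s.map f).powerset = s.powerset.map (Finset.mapEmbedding f).toEmbedding := by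
  ext t
  simp only [mem_powerset, Finset.subset_map_iff, mem_map, RelEmbedding.coe_toEmbedding,
    Finset.mapEmbedding_apply]
  constructor
  · rintro ⟨u, hu, rfl⟩; exact ⟨u, by simpa using hu, rfl⟩
  · rintro ⟨u, hu, rfl⟩; exact ⟨u, by simpa using hu, rfl⟩

lemma last_notMem {k : ℕ} (s : Finset (Fin k)) : Fin.last k ∉ s.map Fin.castSuccEmb := by
  simp [Fin.castSuccEmb]
  intro x hx h
  exact absurd (congrArg Fin.val h) (by simp [Fin.ext_iff] at h ⊢; omega)

lemma sum_split (k : ℕ) (F : Finset (Fin (k + 1)) → ℤ) :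
    ∑ s : Finset (Fin (k + 1)), F s =
      (∑ s : Finset (Fin k), F (s.map Fin.castSuccEmb)) +
        ∑ s : Finset (Fin k), F (insert (Fin.last k) (s.map Fin.castSuccEmb)) := by
  have h1 : (Finset.univ : Finset (Finset (Fin (k + 1)))) = (Finset.univ : Finset (Fin (k+1))).powerset := by
    rw [Finset.powerset_univ]
  rw [h1, Fin.univ_castSuccEmb, Finset.cons_eq_insert,
    Finset.sum_powerset_insert (last_notMem Finset.univ) , my_powerset_map, Finset.sum_map,
    Finset.sum_map, Finset.powerset_univ]
  simp only [RelEmbedding.coe_toEmbedding, Finset.mapEmbedding_apply]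

lemma myP_map {k : ℕ} (s : Finset (Fin k)) : myP (s.map Fin.castSuccEmb) ↔ myP s := by
  simp [myP, Fin.castSuccEmb]

lemma myP_insert {k : ℕ} (s : Finset (Fin k)) :
    myP (insert (Fin.last k) (s.map Fin.castSuccEmb)) ↔
      myP s ∧ ∀ u ∈ s, (u : ℕ) + 1 ≠ k := by
  simp only [myP, Finset.mem_insert, Finset.mem_map, Fin.castSuccEmb, Fin.coe_castSucc]
  constructor
  · intro h
    constructor
    · intro u hu v hv
      have := h u.castSucc (Or.inr ⟨u, hu, rfl⟩) v.castSucc (Or.inr ⟨v, hv, rfl⟩)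
      simpa using this
    · intro u hu
      have := h u.castSucc (Or.inr ⟨u, hu, rfl⟩) (Fin.last k) (Or.inl rfl)
      simpa using this
  · rintro ⟨h1, h2⟩ u hu v hv
    rcases hu with rfl | ⟨a, ha, rfl⟩ <;> rcases hv with rfl | ⟨b, hb, rfl⟩
    · simp
    · simp only [Fin.val_last, Fin.coe_castSucc]; have := b.isLt; omega
    · simpa using h2 a ha
    · simpa using h1 a ha b hb

lemma myg_rec (m : ℕ) : myg (m + 2) = myg (m + 1) - myg m := by
  classical
  rw [myg, sum_split]
  have e1 : (∑ s : Finset (Fin (m+1)), if myP (s.map Fin.castSuccEmb) then (-1:ℤ) ^ (s.map Fin.castSuccEmb).card else 0) = myg (m+1) := by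
    rw [myg]
    refine Finset.sum_congr rfl fun s _ => ?_
    rw [Finset.card_map]
    exact if_congr (myP_map s) rfl rfl
  have e2 : (∑ s : Finset (Fin (m+1)), if myP (insert (Fin.last (m+1)) (s.map Fin.castSuccEmb)) then (-1:ℤ) ^ (insert (Fin.last (m+1)) (s.map Fin.castSuccEmb)).card else 0) = - myg m := by
    have step1 : ∀ s : Finset (Fin (m+1)),
        (if myP (insert (Fin.last (m+1)) (s.map Fin.castSuccEmb)) then (-1:ℤ) ^ (insert (Fin.last (m+1)) (s.map Fin.castSuccEmb)).card else 0)
        = if (myP s ∧ ∀ u ∈ s, (u : ℕ) + 1 ≠ m + 1) then -(-1:ℤ) ^ s.card else 0 := by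
      intro s
      rw [Finset.card_insert_of_notMem (last_notMem s), Finset.card_map]
      rw [if_congr (myP_insert s) rfl rfl, pow_succ]
      by_cases h : myP s ∧ ∀ u ∈ s, (u : ℕ) + 1 ≠ m + 1
      · rw [if_pos h, if_pos h]; ring
      · rw [if_neg h, if_neg h]
    simp_rw [step1]
    rw [sum_split]
    have z : (∑ s : Finset (Fin m), if (myP (insert (Fin.last m) (s.map Fin.castSuccEmb)) ∧ ∀ u ∈ insert (Fin.last m) (s.map Fin.castSuccEmb), (u : ℕ) + 1 ≠ m + 1) then -(-1:ℤ) ^ (insert (Fin.last m) (s.map Fin.castSuccEmb)).card else 0) = 0 := by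
      refine Finset.sum_eq_zero fun s _ => ?_
      rw [if_neg]
      rintro ⟨-, h2⟩
      exact h2 (Fin.last m) (Finset.mem_insert_self _ _) (by simp)
    rw [z, add_zero]
    rw [myg, ← Finset.sum_neg_distrib]
    refine Finset.sum_congr rfl fun s _ => ?_
    rw [Finset.card_map]
    have hc : (myP (s.map Fin.castSuccEmb) ∧ ∀ u ∈ s.map Fin.castSuccEmb, (u : ℕ) + 1 ≠ m + 1) ↔ myP s := by
      constructor
      · exact fun h => (myP_map s).mp h.1
      · intro h
        refine ⟨(myP_map s).mpr h, ?_⟩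
        simp only [Finset.mem_map]
        rintro u ⟨a, ha, rfl⟩
        have h1 := a.isLt
        have h2 : ((Fin.castSuccEmb a : Fin (m+1)) : ℕ) = a := rfl
        omega
    rw [if_congr hc rfl rfl]
    by_cases h : myP s
    · rw [if_pos h, if_pos h]
    · rw [if_neg h, if_neg h, neg_zero]
  rw [e1, e2]; ring

lemma eval_eq_myg (m : ℕ) : (indPoly (SimpleGraph.pathGraph m)).eval (-1) = myg m := by
  classical
  rw [indPoly, myg, Polynomial.eval_finset_sum]
  refine Finset.sum_congr rfl fun s _ => ?_
  rw [apply_ite (Polynomial.eval (-1 : ℤ)), Polynomial.eval_pow, Polynomial.eval_X,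
    Polynomial.eval_zero]
  have hiff : (∀ u ∈ s, ∀ v ∈ s, ¬ (SimpleGraph.pathGraph m).Adj u v) ↔ myP s := by
    constructor
    · intro h u hu v hv heq
      exact h u hu v hv (SimpleGraph.pathGraph_adj.mpr (Or.inl heq))
    · intro h u hu v hv hadj
      rcases SimpleGraph.pathGraph_adj.mp hadj with h1 | h1
      · exact h u hu v hv h1
      · exact h v hv u hu h1
  split_ifs <;> simp_all

lemma myg_zero : myg 0 = 1 := by
  classical
  rw [myg]
  rw [Finset.univ_unique, Finset.sum_singleton]
  rw [if_pos (by simp [myP])]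
  norm_num [show (default : Finset (Fin 0)) = ∅ from rfl]

lemma myg_one : myg 1 = 0 := by
  classical
  rw [myg]
  have h1 : (Finset.univ : Finset (Finset (Fin 1))) = {∅, {0}} := by decide
  rw [h1, Finset.sum_insert (by decide), Finset.sum_singleton]
  rw [if_pos (by simp [myP]), if_pos (by simp [myP])]
  simp

lemma myg_formula (n : ℕ) (hn : 1 ≤ n) :
    myg (3 * n - 2) = 0 ∧ myg (3 * n - 1) = (-1) ^ n ∧ myg (3 * n) = (-1) ^ n := by
  induction n with
  | zero => omega
  | succ k ih =>
    rcases Nat.eq_or_lt_of_le hn with h | h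
    · have : k = 0 := by omega
      subst this
      have h2 : myg 2 = myg 1 - myg 0 := myg_rec 0
      have h3 : myg 3 = myg 2 - myg 1 := myg_rec 1
      refine ⟨?_, ?_, ?_⟩ <;> simp only [show 3*1-2 = 1 from rfl, show 3*1-1=2 from rfl, show 3*1=3 from rfl] <;>
        simp [myg_one, h2, h3, myg_zero]
    · have hk : 1 ≤ k := by omega
      obtain ⟨i1, i2, i3⟩ := ih hk
      have a1 : 3 * (k+1) - 2 = 3*k + 1 := by omega
      have a2 : 3 * (k+1) - 1 = 3*k + 2 := by omega
      have a3 : 3 * (k+1) = 3*k + 3 := by omega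
      have b2 : 3 * k - 2 = 3*(k-1) + 1 := by omega
      have r1 : myg (3*k+1) = myg (3*k) - myg (3*k-1) := by
        have := myg_rec (3*k - 1)
        have e : 3*k - 1 + 2 = 3*k+1 := by omega
        have e2 : 3*k-1+1 = 3*k := by omega
        rwa [e, e2] at this
      have r2 : myg (3*k+2) = myg (3*k+1) - myg (3*k) := myg_rec (3*k)
      have r3 : myg (3*k+3) = myg (3*k+2) - myg (3*k+1) := myg_rec (3*k+1)
      have hk1 : myg (3*k-1) = (-1)^k := i2
      refine ⟨?_, ?_, ?_⟩
      · rw [a1, r1, i3, hk1]; ring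
      · rw [a2, r2, r1, i3, hk1, pow_succ]; ring
      · rw [a3, r3, r2, r1, i3, hk1, pow_succ]; ring

theorem indPoly_path_at_neg_one (n : ℕ) (hn : 1 ≤ n) :
    (indPoly (SimpleGraph.pathGraph (3 * n - 2))).eval (-1) = 0 ∧
    (indPoly (SimpleGraph.pathGraph (3 * n - 1))).eval (-1) = (-1) ^ n ∧
    (indPoly (SimpleGraph.pathGraph (3 * n))).eval (-1) = (-1) ^ n := by
  obtain ⟨h1, h2, h3⟩ := myg_formula n hn
  exact ⟨by rw [eval_eq_myg, h1], by rw [eval_eq_myg, h2], by rw [eval_eq_myg, h3]⟩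
end

section
/- For every n ≥ 1: I(C_{3n}; −1) = 2·(−1)^n, I(C_{3n+1}; −1) = (−1)^n, and I(C_{3n+2}; −1) = (−1)^{n+1}. -/
/-!
Splitting the independent sets of `G` according to whether they contain a vertex `v` gives
`I(G) = I(G - v) + x · I(G - N[v])`. Realising the path `Pₖ` on `{0, …, k - 1}` inside the Hasse
diagram of `ℕ`, this reads `I(Pₖ₊₂) = I(Pₖ₊₁) + x · I(Pₖ)`, so at `x = -1` the values `pₖ`
satisfy `pₖ₊₃ = -pₖ`, whence `p₃ₙ = (-1)ⁿ`, `p₃ₙ₊₁ = 0`, `p₃ₙ₊₂ = (-1)ⁿ⁺¹`. Deleting a vertex of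
the cycle `Cₖ₊₃` leaves the path `Pₖ₊₂`, and deleting its closed neighbourhood leaves `Pₖ`, so
`I(Cₖ₊₃; -1) = pₖ₊₂ - pₖ`.
-/

open Polynomial

open Finset Fin.NatCast

theorem Fin.natCast_injOn_Iio {m : ℕ} [NeZero m] :
    Set.InjOn (Nat.cast : ℕ → Fin m) (Set.Iio m) := fun a ha b hb hab ↦ by
  simpa [Fin.val_cast_of_lt ha, Fin.val_cast_of_lt hb] using congrArg Fin.val hab

theorem Fin.univ_erase_last_eq_image_natCast (k : ℕ) :
    univ.erase (Fin.last k) = (range k).image (Nat.cast : ℕ → Fin (k + 1)) := by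
  ext u
  simp only [mem_erase, mem_univ, and_true, mem_image, mem_range, ne_eq, Fin.ext_iff,
    Fin.val_last]
  constructor
  · exact fun hu ↦ ⟨u, by omega, Fin.val_cast_of_lt u.isLt⟩
  · rintro ⟨a, ha, hau⟩
    rw [Fin.val_cast_of_lt (by omega)] at hau
    omega

namespace SimpleGraph

variable {V W : Type*}

open Classical in
noncomputable def indPolyOn (G : SimpleGraph V) (S : Finset V) : ℤ[X] :=
  ∑ t ∈ S.powerset, if ∀ u ∈ t, ∀ v ∈ t, ¬ G.Adj u v then X ^ #t else 0

theorem indPoly_eq_indPolyOn_univ [Fintype V] (G : SimpleGraph V) :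
    indPoly G = G.indPolyOn univ := by
  rw [indPoly, indPolyOn, powerset_univ]
  congr!

theorem indPolyOn_empty (G : SimpleGraph V) : G.indPolyOn ∅ = 1 := by
  simp [indPolyOn]

theorem indPolyOn_eq_erase_add [DecidableEq V] (G : SimpleGraph V) [DecidableRel G.Adj]
    {S : Finset V} {v : V} (hv : v ∈ S) :
    G.indPolyOn S =
      G.indPolyOn (S.erase v) + X * G.indPolyOn {u ∈ S.erase v | ¬ G.Adj v u} := by
  have hindep_insert : ∀ t ∈ (S.erase v).powerset,
      (∀ u ∈ insert v t, ∀ w ∈ insert v t, ¬ G.Adj u w) ↔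
        (∀ u ∈ t, ¬ G.Adj v u) ∧ ∀ u ∈ t, ∀ w ∈ t, ¬ G.Adj u w := by
    intro t _
    simp only [mem_insert, forall_eq_or_imp, G.irrefl, not_false_eq_true, true_and]
    grind [G.adj_symm]
  have hcard : ∀ t ∈ (S.erase v).powerset, #(insert v t) = #t + 1 := fun t ht ↦
    card_insert_of_notMem fun h ↦ by simpa using mem_powerset.1 ht h
  have hpowerset : {u ∈ S.erase v | ¬ G.Adj v u}.powerset =
      {t ∈ (S.erase v).powerset | ∀ u ∈ t, ¬ G.Adj v u} := by
    ext t
    simp only [mem_powerset, mem_filter, subset_iff]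
    grind
  rw [indPolyOn, ← insert_erase hv, sum_powerset_insert (notMem_erase v S), erase_insert_eq_erase,
    erase_idem, indPolyOn, indPolyOn, hpowerset, sum_filter, mul_sum]
  congr 1
  refine sum_congr rfl fun t ht ↦ ?_
  simp only [hindep_insert t ht, hcard t ht, ite_and]
  split_ifs <;> ring

theorem indPolyOn_image [DecidableEq W] {G : SimpleGraph V} {H : SimpleGraph W} {f : V → W}
    {S : Finset V} (hf : Set.InjOn f S)
    (hadj : ∀ a ∈ S, ∀ b ∈ S, H.Adj (f a) (f b) ↔ G.Adj a b) :
    H.indPolyOn (S.image f) = G.indPolyOn S := by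
  rw [indPolyOn, powerset_image, sum_image (image_injOn_powerset_of_injOn hf), indPolyOn]
  refine sum_congr rfl fun t ht ↦ ?_
  have htS : t ⊆ S := mem_powerset.1 ht
  rw [card_image_of_injOn (hf.mono (coe_subset.2 htS))]
  congr! 1
  simp only [forall_mem_image]
  exact forall₂_congr fun a ha ↦ forall₂_congr fun b hb ↦ not_congr (hadj a (htS ha) b (htS hb))

noncomputable def pathIndPoly (k : ℕ) : ℤ[X] :=
  (hasse ℕ).indPolyOn (range k)

theorem pathIndPoly_zero : pathIndPoly 0 = 1 :=
  indPolyOn_empty _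

theorem pathIndPoly_one : pathIndPoly 1 = 1 + X := by
  classical
  rw [pathIndPoly, indPolyOn_eq_erase_add _ (self_mem_range_succ 0)]
  simp [indPolyOn_empty]

theorem pathIndPoly_add_two (k : ℕ) :
    pathIndPoly (k + 2) = pathIndPoly (k + 1) + X * pathIndPoly k := by
  classical
  rw [pathIndPoly, indPolyOn_eq_erase_add _ (self_mem_range_succ (k + 1)), range_add_one,
    erase_insert notMem_range_self]
  congr 3
  ext u
  simp only [mem_filter, mem_range, hasse_adj, Nat.covBy_iff_add_one_eq]
  omega

theorem eval_neg_one_pathIndPoly_add_three (k : ℕ) :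
    (pathIndPoly (k + 3)).eval (-1) = -(pathIndPoly k).eval (-1) := by
  rw [pathIndPoly_add_two (k + 1), pathIndPoly_add_two k]
  simp only [eval_add, eval_mul, eval_X]
  ring

theorem eval_neg_one_pathIndPoly_three_mul (n : ℕ) :
    (pathIndPoly (3 * n)).eval (-1) = (-1) ^ n ∧
    (pathIndPoly (3 * n + 1)).eval (-1) = 0 ∧
    (pathIndPoly (3 * n + 2)).eval (-1) = (-1) ^ (n + 1) := by
  induction n with
  | zero => simp [pathIndPoly_add_two, pathIndPoly_one, pathIndPoly_zero]
  | succ n ih =>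
    obtain ⟨h0, h1, h2⟩ := ih
    refine ⟨?_, ?_, ?_⟩
    · rw [show 3 * (n + 1) = 3 * n + 3 by ring, eval_neg_one_pathIndPoly_add_three, h0, pow_succ]
      ring
    · rw [show 3 * (n + 1) + 1 = 3 * n + 1 + 3 by ring, eval_neg_one_pathIndPoly_add_three, h1,
        neg_zero]
    · rw [show 3 * (n + 1) + 2 = 3 * n + 2 + 3 by ring, eval_neg_one_pathIndPoly_add_three, h2,
        pow_succ _ (n + 1)]
      ring

theorem cycleGraph_adj_iff_val {n : ℕ} {u v : Fin (n + 2)} :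
    (cycleGraph (n + 2)).Adj u v ↔ u.val + 1 = v.val ∨ v.val + 1 = u.val ∨
      (u.val = 0 ∧ v.val = n + 1) ∨ (v.val = 0 ∧ u.val = n + 1) := by
  rw [cycleGraph_adj, sub_eq_iff_eq_add', sub_eq_iff_eq_add', Fin.ext_iff, Fin.ext_iff,
    Fin.val_add_one, Fin.val_add_one]
  split_ifs <;> simp only [Fin.ext_iff, Fin.val_last] at * <;> omega

theorem cycleGraph_adj_natCast_iff {m a b : ℕ} [NeZero m] (ha : a + 1 < m) (hb : b + 1 < m) :
    (cycleGraph m).Adj (a : Fin m) (b : Fin m) ↔ (hasse ℕ).Adj a b := by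
  obtain ⟨n, rfl⟩ : ∃ n, m = n + 2 := ⟨m - 2, by omega⟩
  rw [cycleGraph_adj_iff_val, Fin.val_cast_of_lt (by omega), Fin.val_cast_of_lt (by omega),
    hasse_adj, Nat.covBy_iff_add_one_eq, Nat.covBy_iff_add_one_eq]
  omega

theorem filter_not_adj_last_cycleGraph (k : ℕ) [DecidableRel (cycleGraph (k + 3)).Adj] :
    {u ∈ univ.erase (Fin.last (k + 2)) | ¬ (cycleGraph (k + 3)).Adj (Fin.last (k + 2)) u} =
      (range k).image fun a : ℕ ↦ ((a + 1 : ℕ) : Fin (k + 3)) := by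
  ext u
  simp only [mem_filter, mem_erase, mem_univ, and_true, mem_image, mem_range, ne_eq,
    Fin.ext_iff, Fin.val_last, cycleGraph_adj_iff_val]
  constructor
  · exact fun hu ↦ ⟨u - 1, by omega, by rw [Fin.val_cast_of_lt (by omega)]; omega⟩
  · rintro ⟨a, ha, hau⟩
    rw [Fin.val_cast_of_lt (by omega)] at hau
    omega

theorem indPoly_cycleGraph_add_three (k : ℕ) :
    indPoly (cycleGraph (k + 3)) = pathIndPoly (k + 2) + X * pathIndPoly k := by
  classical
  have hlong : (cycleGraph (k + 3)).indPolyOn ((range (k + 2)).image Nat.cast) =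
      pathIndPoly (k + 2) := by
    refine indPolyOn_image (Fin.natCast_injOn_Iio.mono ?_) fun a ha b hb ↦ ?_
    · simp only [coe_range, Set.Iio_subset_Iio_iff]
      omega
    · simp only [mem_range] at ha hb
      exact cycleGraph_adj_natCast_iff (by omega) (by omega)
  have hshort : (cycleGraph (k + 3)).indPolyOn
      ((range k).image fun a : ℕ ↦ ((a + 1 : ℕ) : Fin (k + 3))) = pathIndPoly k := by
    refine indPolyOn_image (fun a ha b hb hab ↦ ?_) fun a ha b hb ↦ ?_
    · simp only [coe_range, Set.mem_Iio] at ha hb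
      simpa using Fin.natCast_injOn_Iio (Set.mem_Iio.2 (by omega)) (Set.mem_Iio.2 (by omega)) hab
    · simp only [mem_range] at ha hb
      rw [cycleGraph_adj_natCast_iff (by omega) (by omega), hasse_adj, hasse_adj]
      simp only [Nat.covBy_iff_add_one_eq]
      omega
  rw [indPoly_eq_indPolyOn_univ, indPolyOn_eq_erase_add _ (mem_univ (Fin.last (k + 2))),
    filter_not_adj_last_cycleGraph, Fin.univ_erase_last_eq_image_natCast, hlong, hshort]

theorem eval_neg_one_indPoly_cycleGraph_add_three (k : ℕ) :
    (indPoly (cycleGraph (k + 3))).eval (-1) =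
      (pathIndPoly (k + 2)).eval (-1) - (pathIndPoly k).eval (-1) := by
  rw [indPoly_cycleGraph_add_three, eval_add, eval_mul, eval_X]
  ring

end SimpleGraph

open SimpleGraph

theorem indPoly_cycle_at_neg_one (n : ℕ) (hn : 1 ≤ n) :
    (indPoly (SimpleGraph.cycleGraph (3 * n))).eval (-1) = 2 * (-1) ^ n ∧
    (indPoly (SimpleGraph.cycleGraph (3 * n + 1))).eval (-1) = (-1) ^ n ∧
    (indPoly (SimpleGraph.cycleGraph (3 * n + 2))).eval (-1) = (-1) ^ (n + 1) := by
  obtain ⟨m, rfl⟩ : ∃ m, n = m + 1 := ⟨n - 1, by omega⟩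
  obtain ⟨p0, p1, p2⟩ := eval_neg_one_pathIndPoly_three_mul m
  obtain ⟨q0, q1, -⟩ := eval_neg_one_pathIndPoly_three_mul (m + 1)
  refine ⟨?_, ?_, ?_⟩
  · rw [show 3 * (m + 1) = 3 * m + 3 by ring, eval_neg_one_indPoly_cycleGraph_add_three, p2, p0]
    ring
  · rw [show 3 * (m + 1) + 1 = 3 * m + 1 + 3 by ring, eval_neg_one_indPoly_cycleGraph_add_three,
      show 3 * m + 1 + 2 = 3 * (m + 1) by ring, q0, p1, sub_zero]
  · rw [show 3 * (m + 1) + 2 = 3 * m + 2 + 3 by ring, eval_neg_one_indPoly_cycleGraph_add_three,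
      show 3 * m + 2 + 2 = 3 * (m + 1) + 1 by ring, q1, p2]
    ring
end

section
/- For every tree T, I(T; −1) ∈ {−1, 0, 1}; that is, the number of independent sets of even size in a tree differs from the number of independent sets of odd size by at most one. -/
open Polynomial

/-!
Write `I(A)` for the independence polynomial at `-1` of the subgraph induced on a vertex set `A`.
Splitting the independent sets of `A ∪ {v}` by whether they contain `v` gives
`I(A ∪ {v}) = I(A) - I(A \ N(v))`. In a forest every nonempty `A` has a vertex `v` with at most
one neighbour in `A`. If `v` has none, the recurrence at `v` gives `I(A) = 0`; if `v` has exactly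
one neighbour `u`, the recurrence at `u` gives `I(A) = -I(A \ N[u])`, and induction on `|A|`
shows `I(A) ∈ {-1, 0, 1}`.
-/

namespace SimpleGraph

variable {V : Type*} {G : SimpleGraph V}

theorem isIndepSet_insert_of_notMem {s : Set V} {v : V} (hv : v ∉ s) :
    G.IsIndepSet (insert v s) ↔ G.IsIndepSet s ∧ ∀ w ∈ s, ¬ G.Adj v w := by
  simp only [isIndepSet_iff, Set.pairwise_insert_of_notMem hv, G.adj_comm _ v, and_self]

theorem IsAcyclic.length_eq_dist_of_isPath (hG : G.IsAcyclic) {u v : V} {p : G.Walk u v}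
    (hp : p.IsPath) : p.length = G.dist u v := by
  obtain ⟨q, hq, hlen⟩ := p.reachable.exists_path_of_dist
  rw [← hlen, Subtype.mk.inj ((hG.subsingleton_path u v).elim ⟨p, hp⟩ ⟨q, hq⟩)]

/-- Take `v` farthest from some `r` within the component of `r`: every neighbour of `v` in `A`
lies on the path from `r` to `v`, hence is its penultimate vertex. -/
theorem IsAcyclic.exists_mem_neighborSet_inter_subsingleton (hG : G.IsAcyclic) {A : Finset V}
    (hA : A.Nonempty) : ∃ v ∈ A, (G.neighborSet v ∩ A).Subsingleton := by
  classical
  obtain ⟨r, hr⟩ := hA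
  obtain ⟨v, hv, hmax⟩ :=
    {w ∈ A | G.Reachable r w}.exists_max_image (G.dist r) ⟨r, by simp [hr]⟩
  rw [Finset.mem_filter] at hv
  obtain ⟨p, hp, -⟩ := hv.2.exists_path_of_dist
  have hpen : ∀ w ∈ G.neighborSet v ∩ A, w = p.penultimate := by
    rintro w ⟨hvw : G.Adj v w, hwA⟩
    refine hG.eq_penultimate_of_adj_end hp hvw (by_contra fun hw => ?_)
    have hle := hmax w (Finset.mem_filter.2 ⟨hwA, hv.2.trans hvw.reachable⟩)
    rw [← hG.length_eq_dist_of_isPath (hp.concat hw hvw), ← hG.length_eq_dist_of_isPath hp,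
      Walk.length_concat] at hle
    omega
  exact ⟨v, hv.1, fun u hu w hw => (hpen u hu).trans (hpen w hw).symm⟩

variable (G) in
open Classical in
/-- `I(G[A]; -1)`, the independence polynomial of the induced subgraph on `A` at `-1`. -/
noncomputable def altIndepCount (A : Finset V) : ℤ :=
  ∑ s ∈ A.powerset, if G.IsIndepSet (s : Set V) then (-1) ^ s.card else 0

@[simp]
theorem altIndepCount_empty : G.altIndepCount ∅ = 1 := by
  simp [altIndepCount]

open Classical in
/-- Deletion–contraction at `v`: an independent set either avoids `v`, or contains `v` and
no neighbour of `v`. -/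
theorem altIndepCount_insert {A : Finset V} {v : V} (hv : v ∉ A) :
    G.altIndepCount (insert v A) =
      G.altIndepCount A - G.altIndepCount {w ∈ A | ¬ G.Adj v w} := by
  have hterm : ∀ t ∈ A.powerset,
      (if G.IsIndepSet (↑(insert v t) : Set V) then (-1 : ℤ) ^ (insert v t).card else 0) =
        if ∀ w ∈ t, ¬ G.Adj v w then
          -(if G.IsIndepSet (t : Set V) then (-1) ^ t.card else 0) else 0 := by
    intro t ht
    have hvt : v ∉ t := fun h => hv (Finset.mem_powerset.1 ht h)
    simp only [Finset.coe_insert, isIndepSet_insert_of_notMem (Finset.mem_coe.not.2 hvt),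
      Finset.card_insert_of_notMem hvt]
    split_ifs <;> simp_all [pow_succ]
  have hpowerset :
      {t ∈ A.powerset | ∀ w ∈ t, ¬ G.Adj v w} = {w ∈ A | ¬ G.Adj v w}.powerset := by
    ext t
    simp only [Finset.mem_filter, Finset.mem_powerset, Finset.subset_iff]
    grind
  rw [altIndepCount, Finset.sum_powerset_insert hv, Finset.sum_congr rfl hterm,
    ← Finset.sum_filter (fun t => ∀ w ∈ t, ¬ G.Adj v w), hpowerset, Finset.sum_neg_distrib,
    ← sub_eq_add_neg]
  rfl

open Classical in
theorem altIndepCount_eq_zero_of_neighborSet_inter_eq_empty {A : Finset V} {v : V} (hv : v ∈ A)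
    (h : G.neighborSet v ∩ A = ∅) : G.altIndepCount A = 0 := by
  have hfilter : {w ∈ A.erase v | ¬ G.Adj v w} = A.erase v :=
    Finset.filter_true_of_mem fun w hw hvw =>
      h.subset ⟨hvw, Finset.mem_of_mem_erase hw⟩
  rw [← Finset.insert_erase hv, altIndepCount_insert (Finset.notMem_erase v A), hfilter, sub_self]

open Classical in
/-- At a leaf `v` of `A` with neighbour `u`, the deletion–contraction at `u` leaves `v` isolated
in `A \ {u}`, so only the contracted term survives. -/
theorem altIndepCount_of_neighborSet_inter_eq_singleton {A : Finset V} {u v : V} (hv : v ∈ A)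
    (h : G.neighborSet v ∩ A = {u}) :
    G.altIndepCount A = -G.altIndepCount {w ∈ A.erase u | ¬ G.Adj u w} := by
  obtain ⟨huv : G.Adj v u, huA⟩ := h.symm.subset rfl
  have hisolated : G.neighborSet v ∩ ↑(A.erase u) = ∅ := by
    rw [Finset.coe_erase, ← Set.inter_sdiff_assoc, h, Set.sdiff_self]
  have hv' : v ∈ A.erase u := Finset.mem_erase.2 ⟨huv.ne, hv⟩
  rw [← Finset.insert_erase huA, altIndepCount_insert (Finset.notMem_erase u A),
    altIndepCount_eq_zero_of_neighborSet_inter_eq_empty hv' hisolated, zero_sub,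
    Finset.erase_insert (Finset.notMem_erase u A)]

theorem IsAcyclic.altIndepCount_mem (hG : G.IsAcyclic) (A : Finset V) :
    G.altIndepCount A ∈ ({-1, 0, 1} : Set ℤ) := by
  classical
  induction A using Finset.strongInduction with
  | _ A ih =>
    obtain rfl | hA := A.eq_empty_or_nonempty
    · simp
    obtain ⟨v, hv, hsub⟩ := hG.exists_mem_neighborSet_inter_subsingleton hA
    obtain h | ⟨u, h⟩ := hsub.eq_empty_or_singleton
    · simp [altIndepCount_eq_zero_of_neighborSet_inter_eq_empty hv h]
    · have hsmaller : {w ∈ A.erase u | ¬ G.Adj u w} ⊂ A :=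
        (Finset.filter_subset _ _).trans_ssubset (Finset.erase_ssubset (h.symm.subset rfl).2)
      have hrest := ih _ hsmaller
      rw [altIndepCount_of_neighborSet_inter_eq_singleton hv h]
      simp only [Set.mem_insert_iff, Set.mem_singleton_iff] at hrest ⊢
      omega

variable (G) in
theorem eval_neg_one_indPoly [Fintype V] :
    (indPoly G).eval (-1) = G.altIndepCount Finset.univ := by
  classical
  rw [indPoly, altIndepCount, Polynomial.eval_finsetSum, Finset.powerset_univ]
  refine Finset.sum_congr rfl fun s _ => ?_
  have hindep : (∀ u ∈ s, ∀ w ∈ s, ¬ G.Adj u w) ↔ G.IsIndepSet (s : Set V) :=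
    ⟨fun h u hu w hw _ => h u hu w hw, fun h u hu w hw huw => h hu hw huw.ne huw⟩
  simp only [hindep]
  split_ifs <;> simp

end SimpleGraph

theorem indPoly_tree_at_neg_one_general {V : Type*} [Fintype V] (T : SimpleGraph V)
    (hacyc : T.IsAcyclic) :
    (indPoly T).eval (-1) ∈ ({-1, 0, 1} : Set ℤ) :=
  T.eval_neg_one_indPoly ▸ hacyc.altIndepCount_mem Finset.univ

theorem indPoly_tree_at_neg_one {V : Type*} [Fintype V] (T : SimpleGraph V)
    (hconn : T.Connected) (hacyc : T.IsAcyclic) :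
    (indPoly T).eval (-1) ∈ ({-1, 0, 1} : Set ℤ) :=
  indPoly_tree_at_neg_one_general T hacyc
end

section
/- For every forest F, I(F; −1) ∈ {−1, 0, 1}. -/
open Polynomial

section Aux

variable {V : Type*} [Fintype V] {F : SimpleGraph V}

open Classical in
/-- Partial independence sum: over independent subsets of `A`. -/
noncomputable def gsum (F : SimpleGraph V) (A : Finset V) : ℤ :=
  ∑ s ∈ A.powerset, if ∀ u ∈ s, ∀ v ∈ s, ¬ F.Adj u v then (-1 : ℤ) ^ s.card else 0

lemma gsum_zero {A : Finset V} {v : V} (hv : v ∈ A) (hiso : ∀ u ∈ A, ¬ F.Adj v u) :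
    gsum F A = 0 := by
  classical
  have hvd : v ∉ A.erase v := Finset.notMem_erase v A
  rw [gsum, ← Finset.insert_erase hv, Finset.sum_powerset_insert hvd]
  have key : ∀ t ∈ (A.erase v).powerset,
      (if ∀ u ∈ insert v t, ∀ w ∈ insert v t, ¬ F.Adj u w then (-1 : ℤ) ^ (insert v t).card else 0)
      = - (if ∀ u ∈ t, ∀ w ∈ t, ¬ F.Adj u w then (-1 : ℤ) ^ t.card else 0) := by
    intro t ht
    rw [Finset.mem_powerset] at ht
    have hvt : v ∉ t := fun h => hvd (ht h)
    have hsub : ∀ x ∈ t, x ∈ A := fun x hx => Finset.mem_of_mem_erase (ht hx)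
    have hiff : (∀ a ∈ insert v t, ∀ b ∈ insert v t, ¬ F.Adj a b) ↔
        (∀ a ∈ t, ∀ b ∈ t, ¬ F.Adj a b) := by
      constructor
      · intro h a ha b hb
        exact h a (Finset.mem_insert_of_mem ha) b (Finset.mem_insert_of_mem hb)
      · intro h a ha b hb hadj
        rcases Finset.mem_insert.mp ha with rfl | ha'
        · rcases Finset.mem_insert.mp hb with rfl | hb'
          · exact F.irrefl hadj
          · exact hiso b (hsub b hb') hadj
        · rcases Finset.mem_insert.mp hb with rfl | hb'
          · exact hiso a (hsub a ha') hadj.symm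
          · exact h a ha' b hb' hadj
    rw [Finset.card_insert_of_notMem hvt, if_congr hiff rfl rfl]
    split <;> simp [pow_succ]
  rw [Finset.sum_congr rfl key, Finset.sum_neg_distrib]
  ring

/-- In a forest, a finite set in which every vertex has a neighbour inside the set
contains a "leaf": a vertex with a unique neighbour inside the set. -/
lemma exists_leaf (hacyc : F.IsAcyclic) (A : Finset V)
    (hA : ∀ v ∈ A, ∃ u ∈ A, F.Adj v u) (hne : A.Nonempty) :
    ∃ v ∈ A, ∃ u ∈ A, F.Adj v u ∧ ∀ w ∈ A, F.Adj v w → w = u := by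
  classical
  by_contra hno
  push_neg at hno
  -- every path inside A extends; build arbitrarily long paths
  have step : ∀ (a b : V) (p : F.Walk a b), p.IsPath → (∀ x ∈ p.support, x ∈ A) →
      ∃ (a' b' : V) (p' : F.Walk a' b'), p'.IsPath ∧ (∀ x ∈ p'.support, x ∈ A) ∧
        p'.length = p.length + 1 := by
    intro a b p hp hsupp
    cases p with
    | nil =>
        have ha : a ∈ A := hsupp a (SimpleGraph.Walk.start_mem_support _)
        obtain ⟨u, hu, hadj⟩ := hA a ha
        refine ⟨u, a, SimpleGraph.Walk.cons hadj.symm SimpleGraph.Walk.nil, ?_, ?_, rfl⟩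
        · simp [SimpleGraph.Walk.cons_isPath_iff, hadj.ne']
        · intro x hx
          simp only [SimpleGraph.Walk.support_cons, SimpleGraph.Walk.support_nil,
            List.mem_cons, List.mem_singleton] at hx
          rcases hx with rfl | hx
          · exact hu
          · simp at hx; subst hx; exact ha
    | cons h q =>
        rename_i c
        have ha : a ∈ A := hsupp a (SimpleGraph.Walk.start_mem_support _)
        have hc : c ∈ A := hsupp c (by simp [SimpleGraph.Walk.support_cons])
        obtain ⟨w, hw, hadjw, hwc⟩ := hno a ha c hc h
        by_cases hwmem : w ∈ (SimpleGraph.Walk.cons h q).support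
        · -- contradiction with acyclicity via path uniqueness
          exfalso
          have hq1 : ((SimpleGraph.Walk.cons h q).takeUntil w hwmem).IsPath :=
            hp.takeUntil hwmem
          have hq2 : (SimpleGraph.Walk.cons hadjw SimpleGraph.Walk.nil : F.Walk a w).IsPath := by
            simp [SimpleGraph.Walk.cons_isPath_iff, hadjw.ne]
          have hpu := hacyc.path_unique ⟨_, hq1⟩ ⟨_, hq2⟩
          have heq : (SimpleGraph.Walk.cons h q).takeUntil w hwmem =
              SimpleGraph.Walk.cons hadjw SimpleGraph.Walk.nil := congrArg Subtype.val hpu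
          have hspec := SimpleGraph.Walk.take_spec (SimpleGraph.Walk.cons h q) hwmem
          rw [heq, SimpleGraph.Walk.cons_append, SimpleGraph.Walk.nil_append] at hspec
          injection hspec with h1 h2 h3 h4
          exact hwc h2
        · refine ⟨w, b, SimpleGraph.Walk.cons hadjw.symm (SimpleGraph.Walk.cons h q), ?_, ?_, rfl⟩
          · exact hp.cons hwmem
          · intro x hx
            rw [SimpleGraph.Walk.support_cons, List.mem_cons] at hx
            rcases hx with rfl | hx
            · exact hw
            · exact hsupp x hx
  have long : ∀ n : ℕ, ∃ (a b : V) (p : F.Walk a b), p.IsPath ∧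
      (∀ x ∈ p.support, x ∈ A) ∧ n ≤ p.length := by
    intro n
    induction n with
    | zero =>
        obtain ⟨a, ha⟩ := hne
        exact ⟨a, a, SimpleGraph.Walk.nil, SimpleGraph.Walk.IsPath.nil, by simpa using ha,
          Nat.zero_le _⟩
    | succ n ih =>
        obtain ⟨a, b, p, hp, hsupp, hlen⟩ := ih
        obtain ⟨a', b', p', hp', hsupp', hlen'⟩ := step a b p hp hsupp
        exact ⟨a', b', p', hp', hsupp', by omega⟩
  obtain ⟨a, b, p, hp, _, hlen⟩ := long (Fintype.card V)
  have := hp.length_lt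
  omega

lemma gsum_mem (hacyc : F.IsAcyclic) : ∀ A : Finset V, gsum F A ∈ ({-1, 0, 1} : Set ℤ) := by
  classical
  intro A
  induction A using Finset.strongInduction with
  | _ A ih =>
  by_cases hiso : ∃ v ∈ A, ∀ u ∈ A, ¬ F.Adj v u
  · obtain ⟨v, hv, hvi⟩ := hiso
    rw [gsum_zero hv hvi]
    simp
  · push_neg at hiso
    rcases A.eq_empty_or_nonempty with rfl | hne
    · simp [gsum]
    · have hA : ∀ v ∈ A, ∃ u ∈ A, F.Adj v u := by
        intro v hv
        obtain ⟨u, hu, hadj⟩ := hiso v hv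
        exact ⟨u, hu, hadj⟩
      obtain ⟨v, hv, u, hu, hadj, huniq⟩ := exists_leaf hacyc A hA hne
      have hvu : v ≠ u := hadj.ne
      set B : Finset V := (A.erase u).filter (fun x => ¬ F.Adj u x) with hBdef
      -- split the sum on membership of u
      have hud : u ∉ A.erase u := Finset.notMem_erase u A
      rw [gsum, ← Finset.insert_erase hu, Finset.sum_powerset_insert hud]
      -- first sum is gsum of A.erase u, which is 0 since v is now isolated
      have h1 : ∑ t ∈ (A.erase u).powerset,
          (if ∀ x ∈ t, ∀ y ∈ t, ¬ F.Adj x y then (-1 : ℤ) ^ t.card else 0) = 0 := by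
        have hv' : v ∈ A.erase u := Finset.mem_erase.mpr ⟨hvu, hv⟩
        have : gsum F (A.erase u) = 0 := by
          apply gsum_zero hv'
          intro x hx hadjx
          exact (Finset.mem_erase.mp hx).1 (huniq x (Finset.mem_of_mem_erase hx) hadjx)
        simpa [gsum] using this
      -- second sum equals - gsum F B
      have h2 : ∑ t ∈ (A.erase u).powerset,
          (if ∀ x ∈ insert u t, ∀ y ∈ insert u t, ¬ F.Adj x y then
            (-1 : ℤ) ^ (insert u t).card else 0) = - gsum F B := by
        have hstep : ∀ t ∈ (A.erase u).powerset,
            (if ∀ x ∈ insert u t, ∀ y ∈ insert u t, ¬ F.Adj x y then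
              (-1 : ℤ) ^ (insert u t).card else 0)
            = - (if t ⊆ B ∧ ∀ x ∈ t, ∀ y ∈ t, ¬ F.Adj x y then (-1 : ℤ) ^ t.card else 0) := by
          intro t ht
          rw [Finset.mem_powerset] at ht
          have hut : u ∉ t := fun h => hud (ht h)
          have hiff : (∀ x ∈ insert u t, ∀ y ∈ insert u t, ¬ F.Adj x y) ↔
              (t ⊆ B ∧ ∀ x ∈ t, ∀ y ∈ t, ¬ F.Adj x y) := by
            constructor
            · intro h
              refine ⟨?_, fun x hx y hy =>
                h x (Finset.mem_insert_of_mem hx) y (Finset.mem_insert_of_mem hy)⟩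
              intro x hx
              rw [hBdef, Finset.mem_filter]
              exact ⟨ht hx, h u (Finset.mem_insert_self _ _) x (Finset.mem_insert_of_mem hx)⟩
            · rintro ⟨htB, h⟩ a ha b hb hadj
              rcases Finset.mem_insert.mp ha with hau | ha'
              · rcases Finset.mem_insert.mp hb with hbu | hb'
                · rw [hau, hbu] at hadj; exact F.irrefl hadj
                · have hbB := htB hb'
                  rw [hBdef, Finset.mem_filter] at hbB
                  rw [hau] at hadj
                  exact hbB.2 hadj
              · rcases Finset.mem_insert.mp hb with hbu | hb'
                · have haB := htB ha'
                  rw [hBdef, Finset.mem_filter] at haB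
                  rw [hbu] at hadj
                  exact haB.2 hadj.symm
                · exact h a ha' b hb' hadj
          rw [Finset.card_insert_of_notMem hut, if_congr hiff rfl rfl]
          split <;> simp [pow_succ]
        rw [Finset.sum_congr rfl hstep, Finset.sum_neg_distrib, neg_inj]
        have hBsub : B ⊆ A.erase u := Finset.filter_subset _ _
        rw [gsum]
        rw [← Finset.sum_subset (Finset.powerset_mono.mpr hBsub)
          (fun t ht htn => by
            rw [Finset.mem_powerset] at htn
            exact if_neg (fun hc => htn hc.1))]
        apply Finset.sum_congr rfl
        intro t ht
        rw [Finset.mem_powerset] at ht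
        simp [ht]
      rw [h1, h2, zero_add]
      have hBA : B ⊂ A := by
        refine Finset.ssubset_iff_of_subset ?_ |>.mpr ⟨u, hu, ?_⟩
        · exact (Finset.filter_subset _ _).trans (Finset.erase_subset _ _)
        · intro hmem
          exact hud ((Finset.filter_subset _ _) hmem)
      have := ih B hBA
      rcases this with h | h | h <;> simp_all

end Aux


theorem indPoly_forest_at_neg_one {V : Type*} [Fintype V] (F : SimpleGraph V)
    (hacyc : F.IsAcyclic) :
    (indPoly F).eval (-1) ∈ ({-1, 0, 1} : Set ℤ) := by
  classical
  have heval : (indPoly F).eval (-1) = gsum F Finset.univ := by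
    rw [indPoly, Polynomial.eval_finset_sum, gsum, Finset.powerset_univ]
    refine Finset.sum_congr rfl fun s _ => ?_
    by_cases hc : ∀ u ∈ s, ∀ v ∈ s, ¬ F.Adj u v
    · rw [if_pos hc, if_pos hc]; simp
    · rw [if_neg hc, if_neg hc]; simp
  rw [heval]
  exact gsum_mem hacyc Finset.univ
end

section
/- For any tree T on at least 2 vertices and any vertex v of T, I(T−v; −1) · I(T−N[v]; −1) ∈ {0, 1}. -/
/-!
At `x = -1` the independence polynomial obeys the deletion recurrence
`I(G) = I(G - v) - I(G - N[v])`. In a forest pick a vertex `u` of degree at most one. If `u` is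
isolated the two terms agree and `I(F) = 0`; if `u` has the single neighbour `w`, applying the
recurrence at `u` and then at `w` gives `I(F) = -I(F - u - N[w])`. Hence `I(F; -1) ∈ {-1, 0, 1}`
for every forest. For `a = I(T - v; -1)` and `b = I(T - N[v]; -1)` the numbers `a`, `b` and
`a - b = I(T; -1)` all lie in `{-1, 0, 1}`, which leaves no room for `a * b = -1`.
-/

open Polynomial

open Finset

namespace SimpleGraph

open Classical

variable {V : Type*} {G : SimpleGraph V}

theorem IsAcyclic.eq_penultimate_of_adj_of_dist_lt (hG : G.IsAcyclic) {r x w : V}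
    {p : G.Walk r x} (hp : p.IsPath) (hlen : p.length = G.dist r x) (hadj : G.Adj x w)
    (hd : G.dist r w < G.dist r x) : w = p.penultimate := by
  obtain ⟨q, hq, hqlen⟩ := (p.reachable.trans hadj.reachable).exists_path_of_dist
  by_cases hx : x ∈ q.support
  · have := congrArg Walk.length (hG.path_concat hp hq hadj hx)
    rw [Walk.length_concat] at this
    omega
  · exact hG.eq_penultimate_of_adj_end hp hadj
      (hG.mem_support_of_ne_mem_support_of_adj_of_isPath hp hq hadj hx)

theorem IsAcyclic.exists_mem_card_filter_adj_le_one (hG : G.IsAcyclic) {A : Finset V}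
    (hA : A.Nonempty) : ∃ u ∈ A, #{w ∈ A | G.Adj u w} ≤ 1 := by
  -- a vertex of `A` farthest from `r` within its component: its neighbours in `A` are all
  -- closer to `r`, and in a forest only the penultimate vertex of a shortest path is
  obtain ⟨r, hr⟩ := hA
  obtain ⟨u, hu, hmax⟩ := exists_max_image {x ∈ A | G.Reachable r x} (G.dist r)
    ⟨r, mem_filter.2 ⟨hr, .rfl⟩⟩
  obtain ⟨huA, hru⟩ := mem_filter.1 hu
  obtain ⟨p, hp, hplen⟩ := hru.exists_path_of_dist
  refine ⟨u, huA, card_le_one.2 fun w₁ hw₁ w₂ hw₂ => ?_⟩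
  have hparent : ∀ w ∈ {w ∈ A | G.Adj u w}, w = p.penultimate := by
    intro w hw
    obtain ⟨hwA, hadj⟩ := mem_filter.1 hw
    have hle := hmax w (mem_filter.2 ⟨hwA, hru.trans hadj.reachable⟩)
    exact hG.eq_penultimate_of_adj_of_dist_lt hp hplen hadj
      (lt_of_le_of_ne hle (hG.dist_ne_of_adj hadj hru).symm)
  rw [hparent w₁ hw₁, hparent w₂ hw₂]

variable (G)

/-- `I(G[A]; -1)`, kept inside `G` so that the recursion runs over finsets of one vertex type
rather than over induced subgraphs on varying subtypes. -/
noncomputable def indepAltSum (A : Finset V) : ℤ :=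
  ∑ s ∈ A.powerset.filter (fun s : Finset V ↦ G.IsIndepSet ↑s), (-1) ^ #s

theorem eval_neg_one_indPoly_induce (S : Set V) [Fintype S] :
    (indPoly (G.induce S)).eval (-1) = G.indepAltSum S.toFinset := by
  rw [indPoly, eval_finsetSum, indepAltSum, sum_filter]
  refine sum_nbij' (fun s => s.map (.subtype _)) (fun s => s.subtype (· ∈ S))
    (fun s _ => ?_) (fun _ _ => mem_univ _) (fun s _ => ?_) (fun s hs => ?_) (fun s _ => ?_)
  · simpa [subset_iff] using fun x hx _ => hx
  · ext x
    simp
  · rw [mem_powerset] at hs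
    exact subtype_map_of_mem fun x hx => by simpa using hs hx
  · simp only [Set.Pairwise, apply_ite (eval (-1 : ℤ)), eval_pow, eval_X, eval_zero, card_map]
    refine if_congr ?_ rfl rfl
    simp only [coe_map, Function.Embedding.coe_subtype, Set.forall_mem_image, mem_coe,
      Subtype.forall, induce_adj]
    exact ⟨fun h x hx hxs y hy hys _ => h x hx hxs y hy hys,
      fun h x hx hxs y hy hys hadj => h x hx hxs y hy hys hadj.ne hadj⟩

theorem isIndepSet_insert {a : V} {s : Set V} :
    G.IsIndepSet (insert a s) ↔ G.IsIndepSet s ∧ ∀ b ∈ s, ¬G.Adj a b := by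
  rw [← isClique_compl, isClique_insert, isClique_compl]
  simp only [compl_adj]
  exact and_congr_right' ⟨fun h b hb hadj => (h b hb hadj.ne).2 hadj,
    fun h b hb hab => ⟨hab, h b hb⟩⟩

theorem indepAltSum_eq_sub {A : Finset V} {v : V} (hv : v ∈ A) :
    G.indepAltSum A =
      G.indepAltSum (A.erase v) - G.indepAltSum ((A.erase v).filter (¬G.Adj v ·)) := by
  set N := (A.erase v).filter (¬G.Adj v ·)
  have hpow : (A.erase v).powerset.filter (· ⊆ N) = N.powerset := by
    ext t
    simp only [mem_filter, mem_powerset]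
    exact ⟨And.right, fun h => ⟨h.trans (filter_subset _ _), h⟩⟩
  have hinsert : ∀ t ∈ (A.erase v).powerset,
      (if G.IsIndepSet ↑(insert v t) then (-1 : ℤ) ^ #(insert v t) else 0) =
        -if t ⊆ N then if G.IsIndepSet ↑t then (-1) ^ #t else 0 else 0 := by
    intro t ht
    rw [mem_powerset] at ht
    have hvt : v ∉ t := fun h => notMem_erase v A (ht h)
    have hN : t ⊆ N ↔ ∀ u ∈ t, ¬G.Adj v u := by
      simp only [N, subset_iff, mem_filter]
      exact ⟨fun h u hu => (h hu).2, fun h u hu => ⟨ht hu, h u hu⟩⟩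
    simp only [coe_insert, isIndepSet_insert, card_insert_of_notMem hvt, hN]
    split_ifs <;> simp_all [pow_succ]
  have hsplit := sum_powerset_insert (notMem_erase v A)
    fun t => if G.IsIndepSet ↑t then (-1 : ℤ) ^ #t else 0
  rw [insert_erase hv, sum_congr rfl hinsert, sum_neg_distrib,
    ← sum_filter (· ⊆ N), hpow] at hsplit
  simp only [indepAltSum, sum_filter, hsplit, sub_eq_add_neg]

variable {G} in
theorem IsAcyclic.abs_indepAltSum_le_one (hG : G.IsAcyclic) (A : Finset V) :
    |G.indepAltSum A| ≤ 1 := by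
  induction A using Finset.strongInduction with | H A ih =>
  rcases A.eq_empty_or_nonempty with rfl | hA
  · simp [indepAltSum, filter_singleton]
  obtain ⟨u, hu, hdeg⟩ := hG.exists_mem_card_filter_adj_le_one hA
  rw [G.indepAltSum_eq_sub hu]
  rcases Nat.le_one_iff_eq_zero_or_eq_one.1 hdeg with hdeg | hdeg
  · have hisolated : (A.erase u).filter (¬G.Adj u ·) = A.erase u :=
      filter_true_of_mem fun w hw hadj => by
        simpa [hdeg] using card_pos.2 ⟨w, mem_filter.2 ⟨mem_of_mem_erase hw, hadj⟩⟩
    simp [hisolated]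
  · obtain ⟨w, hw⟩ := card_eq_one.1 hdeg
    have hadj : ∀ x, x ∈ A ∧ G.Adj u x ↔ x = w := fun x => by
      simpa using congrArg (x ∈ ·) hw
    have hwA : w ∈ A.erase u := by
      have := (hadj w).2 rfl
      exact mem_erase.2 ⟨this.2.ne.symm, this.1⟩
    have hleaf : (A.erase u).filter (¬G.Adj u ·) = (A.erase u).erase w := by
      ext x
      have := hadj x
      simp only [mem_filter, mem_erase]
      tauto
    rw [hleaf, G.indepAltSum_eq_sub hwA, sub_sub_cancel_left, abs_neg]
    exact ih _ <| (filter_subset _ _).trans_ssubset <|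
      (erase_subset _ _).trans_ssubset (erase_ssubset hu)

end SimpleGraph

theorem mul_mem_zero_one_of_abs_le_one {a b : ℤ} (ha : |a| ≤ 1) (hb : |b| ≤ 1)
    (hab : |a - b| ≤ 1) : a * b ∈ ({0, 1} : Set ℤ) := by
  rw [abs_le] at ha hb hab
  obtain ⟨ha₀, ha₁⟩ := ha
  obtain ⟨hb₀, hb₁⟩ := hb
  interval_cases a <;> interval_cases b <;> simp_all

open Classical in
theorem indPoly_tree_deletion_product_general {V : Type*} [Fintype V] (T : SimpleGraph V)
    (hacyc : T.IsAcyclic) (v : V) :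
    (indPoly (T.induce {u | u ≠ v})).eval (-1) *
      (indPoly (T.induce ({v} ∪ T.neighborSet v)ᶜ)).eval (-1) ∈ ({0, 1} : Set ℤ) := by
  have hdel : ({u | u ≠ v} : Set V).toFinset = univ.erase v := by
    ext
    simp
  have hclosed : (({v} ∪ T.neighborSet v)ᶜ : Set V).toFinset =
      (univ.erase v).filter (¬T.Adj v ·) := by
    ext
    rw [Set.mem_toFinset]
    simp
  rw [T.eval_neg_one_indPoly_induce, T.eval_neg_one_indPoly_induce, hdel, hclosed]
  have hsub := T.indepAltSum_eq_sub (mem_univ v)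
  exact mul_mem_zero_one_of_abs_le_one (hacyc.abs_indepAltSum_le_one _)
    (hacyc.abs_indepAltSum_le_one _) (hsub ▸ hacyc.abs_indepAltSum_le_one _)

open Classical in
theorem indPoly_tree_deletion_product {V : Type*} [Fintype V] (T : SimpleGraph V)
    (hconn : T.Connected) (hacyc : T.IsAcyclic) (hV : 2 ≤ Fintype.card V) (v : V) :
    (indPoly (T.induce {u | u ≠ v})).eval (-1) *
      (indPoly (T.induce ({v} ∪ T.neighborSet v)ᶜ)).eval (-1) ∈ ({0, 1} : Set ℤ) :=
  indPoly_tree_deletion_product_general T hacyc v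
end
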